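/- For every natural number n and all natural numbers r, s with 1 ≤ s ≤ r, ∑_{k=0}^{n} (−1)^k · (C(n,k)/C(k+r, s)) · H_k^{(2)} = (s/(r−s+1)) · ( H_n^{(2)} / C(n+r, r−s+1) − ∑_{k=1}^{n} (H_n − H_{n−k}) / (k · C(n−k+r, r−s+1)) ), as an identity of real numbers. -/

import Mathlib

open Finset

noncomputable def H : ℕ → ℝ := fun m => ∑ j ∈ range m, (1 : ℝ) / (j + 1)

noncomputable def H2 : ℕ → ℝ := fun m => ∑ j ∈ range m, (1 : ℝ) / ((j : ℝ) + 1) ^ 2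

/-!
Write `B a n = ∑ₖ (-1)ᵏ C(n,k) aₖ` for the binomial transform. Since `B a n = (-1)ⁿ Δⁿ a 0`,
the Gregory–Newton formula says that `B` is an involution. Substituting `a = B (B a)` into
`B (a · H2)` and using `C(n,k) C(k,m) = C(n,m) C(n-m,k-m)` leaves only the finite differences of
`H2`, namely `Δ^(p+1) H2 m = (-1)ᵖ (H (m+p+1) - H m) / ((p+1) C(m+p+1,m))`, so that
`B (a · H2) n = H2 n · B a n - ∑_{m<n} (H n - H m) / (n-m) · B a m` for every sequence `a`.
For `aₖ = 1 / C(k+r,s)` one has `B a m = s / (r-s+1) / C(m+r, r-s+1)`. Both closed forms for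
finite differences follow by induction from `Δ^(p+1) f m = Δ^p f (m+1) - Δ^p f m`.
-/

open fwdDiff

section BinomialTransform

variable {R : Type*} [CommRing R]

def binomialTransform (a : ℕ → R) (n : ℕ) : R :=
  ∑ k ∈ range (n + 1), (-1) ^ k * (n.choose k : R) * a k

theorem binomialTransform_shift_eq_fwdDiff_iter (f : ℕ → R) (y n : ℕ) :
    binomialTransform (fun k => f (y + k)) n = (-1) ^ n * (Δ_[1])^[n] f y := by
  rw [fwdDiff_iter_eq_sum_shift, mul_sum, binomialTransform]
  refine sum_congr rfl fun k hk => ?_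
  obtain ⟨j, rfl⟩ := Nat.exists_eq_add_of_le (Nat.lt_succ_iff.mp (mem_range.mp hk))
  simp only [Nat.add_sub_cancel_left, zsmul_eq_mul, smul_eq_mul, mul_one, Int.cast_mul,
    Int.cast_pow, Int.cast_neg, Int.cast_one, Int.cast_natCast]
  have hsign : (-1 : R) ^ (k + j) * (-1) ^ j = (-1) ^ k := by
    rw [pow_add, mul_assoc, ← pow_add, ← two_mul, pow_mul, neg_one_sq, one_pow, mul_one]
  linear_combination (-(((k + j).choose k : R) * f (y + k))) * hsign

theorem binomialTransform_binomialTransform (a : ℕ → R) :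
    binomialTransform (binomialTransform a) = a := by
  funext n
  have hΔ (k : ℕ) : (Δ_[1])^[k] a 0 = (-1) ^ k * binomialTransform a k := by
    have h := binomialTransform_shift_eq_fwdDiff_iter a 0 k
    simp only [zero_add] at h
    rw [h, ← mul_assoc, ← pow_add, ← two_mul, pow_mul, neg_one_sq, one_pow, one_mul]
  calc binomialTransform (binomialTransform a) n
      = ∑ k ∈ range (n + 1), n.choose k • (Δ_[1])^[k] a 0 := by
        simp only [binomialTransform, hΔ, nsmul_eq_mul]
        exact sum_congr rfl fun k _ => by ring
    _ = a n := by simpa using (shift_eq_sum_fwdDiff_iter 1 a n 0).symm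

theorem sum_neg_one_pow_mul_choose_mul_choose (f : ℕ → R) {m n : ℕ} (hmn : m ≤ n) :
    ∑ k ∈ range (n + 1), (-1) ^ k * (n.choose k : R) * (k.choose m : R) * f k =
      (-1) ^ m * n.choose m * binomialTransform (fun i => f (m + i)) (n - m) := by
  obtain ⟨p, rfl⟩ := Nat.exists_eq_add_of_le hmn
  rw [add_assoc, sum_range_add, Nat.add_sub_cancel_left, binomialTransform, mul_sum]
  rw [sum_eq_zero fun k hk => by simp [Nat.choose_eq_zero_of_lt (mem_range.mp hk)], zero_add]
  refine sum_congr rfl fun i _ => ?_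
  have hchoose : ((m + p).choose (m + i) : R) * ((m + i).choose m : R) =
      (m + p).choose m * p.choose i := by
    rw [← Nat.cast_mul, ← Nat.cast_mul, Nat.choose_mul (Nat.le_add_right m i)]
    simp
  rw [pow_add]
  linear_combination (-1) ^ m * (-1) ^ i * f (m + i) * hchoose

end BinomialTransform

theorem sum_Icc_one_eq_sum_range_sub {M : Type*} [AddCommMonoid M] (f : ℕ → ℕ → M) (n : ℕ) :
    ∑ k ∈ Icc 1 n, f k (n - k) = ∑ m ∈ range n, f (n - m) m := by
  refine sum_nbij' (fun k => n - k) (fun m => n - m) ?_ ?_ ?_ ?_ ?_ <;>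
    intro k hk <;> simp only [mem_Icc, mem_range] at hk ⊢
  all_goals first | omega | rw [Nat.sub_sub_self (by omega)]

theorem H_succ (n : ℕ) : H (n + 1) = H n + 1 / (n + 1) := sum_range_succ _ _

theorem H2_succ (n : ℕ) : H2 (n + 1) = H2 n + 1 / ((n : ℝ) + 1) ^ 2 := sum_range_succ _ _

theorem fwdDiff_iter_succ_H2 (p m : ℕ) :
    (Δ_[1])^[p + 1] H2 m =
      (-1) ^ p * (H (m + p + 1) - H m) / ((p + 1) * (m + p + 1).choose m) := by
  induction p generalizing m with
  | zero =>
    simp only [zero_add, Function.iterate_one, fwdDiff, H2_succ, add_zero, H_succ,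
      Nat.choose_succ_self_right, pow_zero, Nat.cast_add, Nat.cast_one]
    field_simp
    ring
  | succ p ih =>
    rw [Function.iterate_succ_apply', fwdDiff, ih (m + 1), ih m]
    have hc : ((m + p + 1).choose m : ℝ) ≠ 0 :=
      Nat.cast_ne_zero.mpr (Nat.choose_pos (by omega)).ne'
    have h_choose : ((m + p + 2).choose m : ℝ) =
        (m + p + 1).choose m * (m + p + 2) / (p + 2) := by
      have h := Nat.choose_mul_succ_eq (m + p + 1) m
      rw [show m + p + 1 + 1 - m = p + 2 by omega] at h
      rw [eq_div_iff (by positivity)]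
      exact_mod_cast h.symm
    have h_choose_succ : ((m + p + 2).choose (m + 1) : ℝ) =
        (m + p + 2) * (m + p + 1).choose m / (m + 1) := by
      rw [eq_div_iff (by positivity)]
      exact_mod_cast (Nat.add_one_mul_choose_eq (m + p + 1) m).symm
    rw [show m + 1 + p + 1 = m + p + 2 by ring, show m + (p + 1) + 1 = m + p + 2 by ring,
      h_choose, h_choose_succ, H_succ (m + p + 1), H_succ m]
    push_cast
    field_simp
    ring

theorem choose_mul_binomialTransform_H2_shift {m n : ℕ} (hmn : m < n) :
    (n.choose m : ℝ) * binomialTransform (fun i => H2 (m + i)) (n - m) =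
      -(H n - H m) / ((n - m : ℕ) : ℝ) := by
  obtain ⟨p, rfl⟩ : ∃ p, n = m + p + 1 := ⟨n - m - 1, by omega⟩
  have hc : ((m + p + 1).choose m : ℝ) ≠ 0 :=
    Nat.cast_ne_zero.mpr (Nat.choose_pos (by omega)).ne'
  rw [binomialTransform_shift_eq_fwdDiff_iter, show m + p + 1 - m = p + 1 by omega,
    fwdDiff_iter_succ_H2, pow_succ]
  push_cast
  field_simp
  rw [← pow_mul, mul_comm p 2, pow_mul, neg_one_sq, one_pow, one_mul]

theorem binomialTransform_mul_H2 (a : ℕ → ℝ) (n : ℕ) :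
    binomialTransform (fun k => a k * H2 k) n =
      H2 n * binomialTransform a n -
        ∑ m ∈ range n, (H n - H m) / ((n - m : ℕ) : ℝ) * binomialTransform a m := by
  set b := binomialTransform a
  have ha (k : ℕ) (hk : k ≤ n) :
      a k = ∑ m ∈ range (n + 1), (-1) ^ m * (k.choose m : ℝ) * b m := by
    conv_lhs => rw [← binomialTransform_binomialTransform a]
    refine sum_subset (range_subset_range.2 (by omega)) fun m _ hm => ?_
    rw [Nat.choose_eq_zero_of_lt (by simpa using hm), Nat.cast_zero, mul_zero, zero_mul]
  have hsign (m : ℕ) : (-1 : ℝ) ^ m * (-1) ^ m = 1 := by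
    rw [← mul_pow, neg_one_mul, neg_neg, one_pow]
  calc binomialTransform (fun k => a k * H2 k) n
      = ∑ k ∈ range (n + 1), ∑ m ∈ range (n + 1),
          (-1) ^ m * b m * ((-1) ^ k * (n.choose k : ℝ) * (k.choose m : ℝ) * H2 k) := by
        refine sum_congr rfl fun k hk => ?_
        beta_reduce
        rw [ha k (Nat.lt_succ_iff.mp (mem_range.mp hk)), sum_mul, mul_sum]
        exact sum_congr rfl fun m _ => by ring
    _ = ∑ m ∈ range (n + 1),
          b m * ((n.choose m : ℝ) * binomialTransform (fun i => H2 (m + i)) (n - m)) := by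
        rw [sum_comm]
        refine sum_congr rfl fun m hm => ?_
        rw [← mul_sum,
          sum_neg_one_pow_mul_choose_mul_choose _ (Nat.lt_succ_iff.mp (mem_range.mp hm))]
        linear_combination
          (b m * (n.choose m : ℝ) * binomialTransform (fun i => H2 (m + i)) (n - m)) * hsign m
    _ = _ := by
        rw [sum_range_succ, Nat.sub_self, sub_eq_neg_add, ← sum_neg_distrib]
        congr 1
        · exact sum_congr rfl fun m hm => by
            rw [choose_mul_binomialTransform_H2_shift (mem_range.mp hm)]; ring
        · simp [binomialTransform, mul_comm]

theorem fwdDiff_iter_inv_choose {s : ℕ} (hs : 0 < s) (n u : ℕ) :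
    (Δ_[1])^[n] (fun x => 1 / ((x + s).choose s : ℝ)) u =
      (-1) ^ n * s / ((u + 1) * (u + n + s).choose (u + 1)) := by
  induction n generalizing u with
  | zero =>
    obtain ⟨t, rfl⟩ : ∃ t, s = t + 1 := ⟨s - 1, by omega⟩
    have h : (u + t + 1).choose (t + 1) * (t + 1) = (u + t + 1).choose (u + 1) * (u + 1) := by
      rw [← Nat.add_one_mul_choose_eq, ← Nat.add_one_mul_choose_eq, ← Nat.choose_symm_add]
    simp only [Function.iterate_zero, id, pow_zero, add_zero, one_mul,
      show u + (t + 1) = u + t + 1 by ring]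
    rw [div_eq_div_iff (Nat.cast_ne_zero.mpr (Nat.choose_pos (by omega)).ne')
      (mul_ne_zero (by positivity) (Nat.cast_ne_zero.mpr (Nat.choose_pos (by omega)).ne'))]
    exact_mod_cast (by linarith :
      1 * ((u + 1) * (u + t + 1).choose (u + 1)) = (t + 1) * (u + t + 1).choose (t + 1))
  | succ n ih =>
    rw [Function.iterate_succ_apply', fwdDiff, ih (u + 1), ih u]
    have hc : ((u + n + s).choose (u + 1) : ℝ) ≠ 0 :=
      Nat.cast_ne_zero.mpr (Nat.choose_pos (by omega)).ne'
    have h_choose_succ : ((u + n + s + 1).choose (u + 2) : ℝ) =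
        (u + n + s + 1) * (u + n + s).choose (u + 1) / (u + 2) := by
      rw [eq_div_iff (by positivity)]
      exact_mod_cast (Nat.add_one_mul_choose_eq (u + n + s) (u + 1)).symm
    have h_choose : ((u + n + s + 1).choose (u + 1) : ℝ) =
        (u + n + s).choose (u + 1) * (u + n + s + 1) / (n + s) := by
      have h := Nat.choose_mul_succ_eq (u + n + s) (u + 1)
      rw [show u + n + s + 1 - (u + 1) = n + s by omega] at h
      rw [eq_div_iff (by positivity)]
      exact_mod_cast h.symm
    rw [show u + 1 + n + s = u + n + s + 1 by omega, show u + (n + 1) + s = u + n + s + 1 by omega,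
      show u + 1 + 1 = u + 2 by omega, h_choose_succ, h_choose]
    push_cast
    field_simp
    ring

theorem binomialTransform_inv_choose {s : ℕ} (hs : 0 < s) (u m : ℕ) :
    binomialTransform (fun k => 1 / ((k + (s + u)).choose s : ℝ)) m =
      s / (u + 1) / (m + (s + u)).choose (u + 1) := by
  have h := binomialTransform_shift_eq_fwdDiff_iter (fun x => 1 / ((x + s).choose s : ℝ)) u m
  rw [fwdDiff_iter_inv_choose hs, ← mul_div_assoc, ← mul_assoc, ← pow_add, ← two_mul, pow_mul,
    neg_one_sq, one_pow, one_mul] at h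
  rw [div_div]
  convert h using 5 <;> ring_nf

theorem stmt_11 (n : ℕ) (r s : ℕ) (hs : 1 ≤ s) (hsr : s ≤ r) :
    ∑ k ∈ range (n + 1),
        (-1 : ℝ) ^ k * ((Nat.choose n k : ℝ) / (Nat.choose (k + r) s : ℝ)) * H2 k =
      ((s : ℝ) / (((r - s : ℕ) : ℝ) + 1)) *
        (H2 n / (Nat.choose (n + r) (r - s + 1) : ℝ) -
          ∑ k ∈ Icc 1 n, (H n - H (n - k)) / ((k : ℝ) * (Nat.choose (n - k + r) (r - s + 1) : ℝ))) := by
  obtain ⟨u, rfl⟩ : ∃ u, r = s + u := ⟨r - s, by omega⟩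
  rw [Nat.add_sub_cancel_left, sum_Icc_one_eq_sum_range_sub
    fun k m => (H n - H m) / ((k : ℝ) * ((m + (s + u)).choose (u + 1) : ℝ))]
  calc ∑ k ∈ range (n + 1), (-1 : ℝ) ^ k * ((n.choose k : ℝ) / ((k + (s + u)).choose s : ℝ)) * H2 k
      = binomialTransform (fun k => 1 / ((k + (s + u)).choose s : ℝ) * H2 k) n :=
        sum_congr rfl fun k _ => by ring
    _ = _ := by
        rw [binomialTransform_mul_H2, binomialTransform_inv_choose hs, mul_sub, mul_sum]
        simp only [binomialTransform_inv_choose hs]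
        congr 1
        · ring
        · exact sum_congr rfl fun m _ => by ring
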